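/- arXiv:1504.00640 — 2 statements merged into one kernel-verified Lean document; each statement's English description precedes it below -/
import Mathlib

section
/- Let α ∈ (0,1). For every a ∈ (1-α, 1), there is exactly one λ ∈ [0, a) with F(λ,a) = -log α; this defines an implicit function Λ(a) ∈ [0, a) on (1-α, 1). -/
/-!
For fixed `a ∈ (0,1)`, `l ↦ F l a` (the Kullback–Leibler divergence of Bernoulli(`l`) from
Bernoulli(`a`)) is continuous and strictly decreasing on `[0,a]`, from `F 0 a = -log (1-a)` down to
`F a a = 0`. Since `1 - a < α < 1`, the level `-log α` lies in `(0, -log (1-a))`, so the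
intermediate value theorem gives exactly one solution in `[0,a)`.
-/

/-- `F(λ,a) = λ log λ + (1-λ) log(1-λ) - λ log a - (1-λ) log(1-a)`, with the convention
`0 log 0 = 0` (in Mathlib `Real.log 0 = 0`). -/
noncomputable def F (l a : ℝ) : ℝ :=
  l * Real.log l + (1 - l) * Real.log (1 - l) - l * Real.log a - (1 - l) * Real.log (1 - a)

open Real Set

theorem F_zero_left (a : ℝ) : F 0 a = -log (1 - a) := by
  simp [F]

theorem F_self (a : ℝ) : F a a = 0 := by
  unfold F
  ring

theorem continuous_F_left (a : ℝ) : Continuous fun l => F l a := by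
  unfold F
  fun_prop

theorem hasDerivAt_F_left (a : ℝ) {l : ℝ} (hl₀ : l ≠ 0) (hl₁ : l ≠ 1) :
    HasDerivAt (fun l => F l a) (log l - log (1 - l) - log a + log (1 - a)) l := by
  have hsub : HasDerivAt (fun l : ℝ => 1 - l) (-1) l := (hasDerivAt_id l).const_sub 1
  have h : HasDerivAt (fun l => F l a)
      (log l + 1 + (log (1 - l) + 1) * (-1) - 1 * log a - (-1) * log (1 - a)) l :=
    (((hasDerivAt_mul_log hl₀).add
      ((hasDerivAt_mul_log (sub_ne_zero.mpr hl₁.symm)).comp l hsub)).sub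
      ((hasDerivAt_id l).mul_const (log a))).sub (hsub.mul_const (log (1 - a)))
  exact h.congr_deriv (by ring)

theorem strictAntiOn_F_left {a : ℝ} (ha : a < 1) :
    StrictAntiOn (fun l => F l a) (Icc 0 a) := by
  refine strictAntiOn_of_deriv_neg (convex_Icc 0 a) (continuous_F_left a).continuousOn ?_
  rw [interior_Icc]
  rintro l ⟨hl₀, hla⟩
  rw [(hasDerivAt_F_left a hl₀.ne' (by linarith)).deriv]
  have hlog_a : log l < log a := log_lt_log hl₀ hla
  have hlog_one_sub : log (1 - a) < log (1 - l) := log_lt_log (by linarith) (by linarith)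
  linarith

/-- Fix `α ∈ (0,1)`. For every `a ∈ (1-α, 1)` there is exactly one `λ ∈ [0,a)` with
`F(λ,a) = -log α`; this defines the implicit function `Λ(a) ∈ [0,a)` on `(1-α,1)`. -/
theorem implicit_lambda_exists_unique (α : ℝ) (hα : α ∈ Set.Ioo (0 : ℝ) 1)
    (a : ℝ) (ha : a ∈ Set.Ioo (1 - α) 1) :
    ∃! l : ℝ, l ∈ Set.Ico 0 a ∧ F l a = -Real.log α := by
  obtain ⟨hα₀, hα₁⟩ := hα
  obtain ⟨ha₀, ha₁⟩ := ha
  have hlevel : -log α ∈ Ioc (F a a) (F 0 a) := by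
    rw [F_self, F_zero_left]
    exact ⟨neg_pos.mpr (log_neg hα₀ hα₁),
      neg_le_neg (log_le_log (by linarith) (by linarith))⟩
  obtain ⟨l, hl, hFl⟩ :=
    intermediate_value_Ico' (by linarith) (continuous_F_left a).continuousOn hlevel
  refine ⟨l, ⟨hl, hFl⟩, fun l' ⟨hl', hFl'⟩ => ?_⟩
  exact (strictAntiOn_F_left ha₁).injOn (Ico_subset_Icc_self hl') (Ico_subset_Icc_self hl)
    (hFl'.trans hFl.symm)
end

section
/- Let Q be a probability measure with Q ≪ P and H(Q|P) ≤ -log α. Then for every A ∈ F one has Q(A) ≥ Λ(P(A)), where Λ: [0,1] → [0,1] is the convex function with Λ(a) = 0 for a ≤ 1-α and Λ(a) equal to the unique λ ∈ [0,a) with F(λ,a) = -log α for a ∈ (1-α,1), Λ(1)=1. Consequently { Q : H(Q|P) ≤ -log α } ⊆ { Q : Q(A) ≥ Λ(P(A)) for all A ∈ F }, and hence e_α(ξ) ≥ u_Λ(ξ) for every bounded random variable ξ, where u_Λ(ξ) = inf { E_Q[ξ] : Q(A) ≥ Λ(P(A)) for all A ∈ F }. -/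
open MeasureTheory

/-- The integrand `(dQ/dP) log (dQ/dP)` of the relative entropy `H(Q|P)`. -/
noncomputable def entIntegrand {Ω : Type*} [MeasurableSpace Ω] (Q P : Measure Ω) (ω : Ω) : ℝ :=
  (Q.rnDeriv P ω).toReal * Real.log (Q.rnDeriv P ω).toReal

/-- `H(Q|P) ≤ β`, where the relative entropy is understood to be `+∞` when the
integrand is not integrable. -/
def EntropyLE {Ω : Type*} [MeasurableSpace Ω] (Q P : Measure Ω) (β : ℝ) : Prop :=
  Integrable (entIntegrand Q P) P ∧ ∫ ω, entIntegrand Q P ω ∂P ≤ β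

/-! Jensen's inequality for `x log x` on each cell of the partition `{A, Aᶜ}` bounds `H(Q|P)`
from below by the binary relative entropy `F(Q(A), P(A))`. Since `F(·, a)` is strictly decreasing
on `[0, a]`, the bound `F(Q(A), a) ≤ -log α = F(Λ(a), a)` forces `Q(A) ≥ Λ(a)`. For the infima,
`P` itself lies in the entropy ball (so that infimum is not the junk value of `sInf ∅`), and
boundedness of `ξ` bounds the other set below. -/

lemma F_eq_mul_log_div_add_mul_log_div {a : ℝ} (ha0 : a ≠ 0) (ha1 : a ≠ 1) (l : ℝ) :
    F l a = l * Real.log (l / a) + (1 - l) * Real.log ((1 - l) / (1 - a)) := by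
  have mul_log_div (x y : ℝ) (hy : y ≠ 0) :
      x * Real.log (x / y) = x * Real.log x - x * Real.log y := by
    rcases eq_or_ne x 0 with rfl | hx
    · simp
    · rw [Real.log_div hx hy]; ring
  rw [mul_log_div _ _ ha0, mul_log_div _ _ (sub_ne_zero.mpr ha1.symm), F]
  ring

lemma F_strictAntiOn {a : ℝ} (ha : a ∈ Set.Ioo (0:ℝ) 1) :
    StrictAntiOn (fun l => F l a) (Set.Icc 0 a) := by
  refine strictAntiOn_of_deriv_neg (convex_Icc 0 a) ?_ fun l hl => ?_
  · have h1 : Continuous fun l : ℝ => l * Real.log l := Real.continuous_mul_log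
    have h2 : Continuous fun l : ℝ => (1 - l) * Real.log (1 - l) :=
      Real.continuous_mul_log.comp (continuous_sub_left 1)
    exact (((h1.add h2).sub (by fun_prop)).sub (by fun_prop)).continuousOn
  rw [interior_Icc] at hl
  obtain ⟨hl0, hla⟩ := hl
  have hl1 : 1 - l ≠ 0 := by linarith [ha.2]
  have hderiv : HasDerivAt (fun l => F l a)
      (Real.log l + 1 - (Real.log (1 - l) + 1) - Real.log a + Real.log (1 - a)) l := by
    have h1 := Real.hasDerivAt_mul_log hl0.ne'
    have h2 := (Real.hasDerivAt_mul_log hl1).comp l ((hasDerivAt_id l).const_sub 1)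
    exact (((h1.add h2).sub ((hasDerivAt_id l).mul_const (Real.log a))).sub
      (((hasDerivAt_id l).const_sub 1).mul_const (Real.log (1 - a)))).congr_deriv (by simp; ring)
  rw [hderiv.deriv]
  have := Real.log_lt_log hl0 hla
  have := Real.log_lt_log (by linarith [ha.2]) (by linarith : 1 - a < 1 - l)
  linarith

lemma le_of_F_le_F {a l m : ℝ} (ha : a ∈ Set.Ioo (0:ℝ) 1) (hl : 0 ≤ l) (hm : m ∈ Set.Ico 0 a)
    (h : F l a ≤ F m a) : m ≤ l := by
  by_contra! hlm
  exact (F_strictAntiOn ha ⟨hl, (hlm.trans hm.2).le⟩ ⟨hm.1, hm.2.le⟩ hlm).not_ge h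

section

variable {Ω : Type*} [MeasurableSpace Ω] {P Q : Measure Ω}

lemma measureReal_mul_log_div_le_setIntegral_entIntegrand [IsFiniteMeasure Q] [IsFiniteMeasure P]
    (hQP : Q ≪ P) (hInt : Integrable (entIntegrand Q P) P) (A : Set Ω) :
    Q.real A * Real.log (Q.real A / P.real A) ≤ ∫ ω in A, entIntegrand Q P ω ∂P := by
  rcases eq_or_ne (P A) 0 with hPA | hPA
  · simp [Measure.real, hQP hPA, Measure.restrict_eq_zero.mpr hPA]
  have hPA_pos : 0 < P.real A := ENNReal.toReal_pos hPA (measure_ne_top P A)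
  have jensen := Real.convexOn_mul_log.map_set_average_le Real.continuous_mul_log.continuousOn
    isClosed_Ici hPA (measure_ne_top P A) (f := fun ω => (Q.rnDeriv P ω).toReal)
    (ae_of_all _ fun _ => ENNReal.toReal_nonneg) Measure.integrable_toReal_rnDeriv.integrableOn
    hInt.integrableOn
  rw [setAverage_eq, setAverage_eq, Measure.setIntegral_toReal_rnDeriv hQP, smul_eq_mul,
    smul_eq_mul, ← div_eq_inv_mul] at jensen
  calc Q.real A * Real.log (Q.real A / P.real A)
      = P.real A * (Q.real A / P.real A * Real.log (Q.real A / P.real A)) := by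
        field_simp
    _ ≤ P.real A * ((P.real A)⁻¹ * ∫ ω in A, entIntegrand Q P ω ∂P) :=
        mul_le_mul_of_nonneg_left jensen hPA_pos.le
    _ = ∫ ω in A, entIntegrand Q P ω ∂P := by field_simp

lemma F_le_integral_entIntegrand [IsProbabilityMeasure Q] [IsProbabilityMeasure P] (hQP : Q ≪ P)
    (hInt : Integrable (entIntegrand Q P) P) {A : Set Ω} (hA : MeasurableSet A)
    (hPA : P.real A ∈ Set.Ioo 0 1) :
    F (Q.real A) (P.real A) ≤ ∫ ω, entIntegrand Q P ω ∂P := by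
  rw [F_eq_mul_log_div_add_mul_log_div hPA.1.ne' hPA.2.ne, ← integral_add_compl hA hInt,
    ← probReal_compl_eq_one_sub hA, ← probReal_compl_eq_one_sub hA]
  exact add_le_add (measureReal_mul_log_div_le_setIntegral_entIntegrand hQP hInt A)
    (measureReal_mul_log_div_le_setIntegral_entIntegrand hQP hInt Aᶜ)

lemma measureReal_eq_one_of_absolutelyContinuous [IsProbabilityMeasure Q] [IsProbabilityMeasure P]
    (hQP : Q ≪ P) {A : Set Ω} (hA : MeasurableSet A) (hPA : P.real A = 1) : Q.real A = 1 := by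
  have hPAc : P Aᶜ = 0 := by
    rw [← measureReal_eq_zero_iff, probReal_compl_eq_one_sub hA, hPA, sub_self]
  have hQAc : Q.real Aᶜ = 0 := by rw [measureReal_def, hQP hPAc, ENNReal.toReal_zero]
  linarith [probReal_compl_eq_one_sub (μ := Q) hA]

lemma le_measureReal_of_entropyLE {α : ℝ} (hα : α < 1) {Λ : ℝ → ℝ}
    (hΛ0 : ∀ a ∈ Set.Icc (0 : ℝ) (1 - α), Λ a = 0)
    (hΛ1 : ∀ a ∈ Set.Ioo (1 - α) 1, Λ a ∈ Set.Ico 0 a ∧ F (Λ a) a = -Real.log α)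
    (hΛ2 : Λ 1 = 1) [IsProbabilityMeasure Q] [IsProbabilityMeasure P] (hQP : Q ≪ P)
    (hQ : EntropyLE Q P (-Real.log α)) {A : Set Ω} (hA : MeasurableSet A) :
    Λ (P.real A) ≤ Q.real A := by
  rcases le_or_gt (P.real A) (1 - α) with hsmall | hlarge
  · rw [hΛ0 _ ⟨measureReal_nonneg, hsmall⟩]
    exact measureReal_nonneg
  rcases (measureReal_le_one (μ := P) (s := A)).lt_or_eq with hlt | hone
  · have hPA : P.real A ∈ Set.Ioo 0 1 := ⟨by linarith, hlt⟩
    obtain ⟨hΛA, hFΛ⟩ := hΛ1 _ ⟨hlarge, hlt⟩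
    refine le_of_F_le_F hPA measureReal_nonneg hΛA ?_
    rw [hFΛ]
    exact (F_le_integral_entIntegrand hQP hQ.1 hA hPA).trans hQ.2
  · rw [hone, hΛ2, measureReal_eq_one_of_absolutelyContinuous hQP hA hone]

lemma entropyLE_self [SigmaFinite P] {β : ℝ} (hβ : 0 ≤ β) : EntropyLE P P β := by
  have hzero : entIntegrand P P =ᵐ[P] fun _ => 0 := by
    filter_upwards [Measure.rnDeriv_self P] with ω hω
    simp [entIntegrand, hω]
  exact ⟨(integrable_zero _ _ _).congr hzero.symm, by rwa [integral_congr_ae hzero, integral_zero]⟩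

lemma neg_le_integral_of_ae_abs_le [IsProbabilityMeasure Q] (hQP : Q ≪ P) {ξ : Ω → ℝ}
    (hξ : Measurable ξ) {C : ℝ} (hC : ∀ᵐ ω ∂P, |ξ ω| ≤ C) : -C ≤ ∫ ω, ξ ω ∂Q := by
  have hCQ : ∀ᵐ ω ∂Q, |ξ ω| ≤ C := hQP.ae_le hC
  have hint : Integrable ξ Q :=
    (integrable_const C).mono' hξ.aestronglyMeasurable (by simpa [Real.norm_eq_abs] using hCQ)
  calc -C = ∫ _, -C ∂Q := by simp
    _ ≤ ∫ ω, ξ ω ∂Q := integral_mono_ae (integrable_const _) hint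
        (hCQ.mono fun ω hω => (abs_le.mp hω).1)

end

theorem evar_ge_commonotone_general
    {Ω : Type*} [MeasurableSpace Ω] (P : Measure Ω) [IsProbabilityMeasure P]
    (α : ℝ) (hα : α ∈ Set.Ioo (0 : ℝ) 1)
    (Λ : ℝ → ℝ)
    (hΛ0 : ∀ a ∈ Set.Icc (0 : ℝ) (1 - α), Λ a = 0)
    (hΛ1 : ∀ a ∈ Set.Ioo (1 - α) 1, Λ a ∈ Set.Ico 0 a ∧ F (Λ a) a = -Real.log α)
    (hΛ2 : Λ 1 = 1) :
    (∀ Q : Measure Ω, IsProbabilityMeasure Q → Q ≪ P → EntropyLE Q P (-Real.log α) →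
      ∀ A : Set Ω, MeasurableSet A → Λ ((P A).toReal) ≤ (Q A).toReal) ∧
    {Q : Measure Ω | IsProbabilityMeasure Q ∧ Q ≪ P ∧ EntropyLE Q P (-Real.log α)}
      ⊆ {Q : Measure Ω | IsProbabilityMeasure Q ∧ Q ≪ P ∧
          ∀ A : Set Ω, MeasurableSet A → Λ ((P A).toReal) ≤ (Q A).toReal} ∧
    (∀ ξ : Ω → ℝ, Measurable ξ → (∃ C : ℝ, ∀ᵐ ω ∂P, |ξ ω| ≤ C) →
      sInf {y : ℝ | ∃ Q : Measure Ω, IsProbabilityMeasure Q ∧ Q ≪ P ∧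
          (∀ A : Set Ω, MeasurableSet A → Λ ((P A).toReal) ≤ (Q A).toReal) ∧
          y = ∫ ω, ξ ω ∂Q}
        ≤ sInf {y : ℝ | ∃ Q : Measure Ω, IsProbabilityMeasure Q ∧ Q ≪ P ∧
          EntropyLE Q P (-Real.log α) ∧ y = ∫ ω, ξ ω ∂Q}) := by
  have distortion_le (Q : Measure Ω) (hQ : IsProbabilityMeasure Q) (hQP : Q ≪ P)
      (hent : EntropyLE Q P (-Real.log α)) (A : Set Ω) (hA : MeasurableSet A) :
      Λ ((P A).toReal) ≤ (Q A).toReal :=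
    le_measureReal_of_entropyLE hα.2 hΛ0 hΛ1 hΛ2 hQP hent hA
  refine ⟨distortion_le, fun Q ⟨hQ, hQP, hent⟩ => ⟨hQ, hQP, distortion_le Q hQ hQP hent⟩, ?_⟩
  rintro ξ hξ ⟨C, hC⟩
  refine csInf_le_csInf ⟨-C, ?_⟩ ⟨_, P, inferInstance, .rfl,
    entropyLE_self (neg_nonneg.mpr (Real.log_nonpos hα.1.le hα.2.le)), rfl⟩ ?_
  · rintro _ ⟨Q, hQ, hQP, -, rfl⟩
    exact neg_le_integral_of_ae_abs_le hQP hξ hC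
  · rintro _ ⟨Q, hQ, hQP, hent, rfl⟩
    exact ⟨Q, hQ, hQP, distortion_le Q hQ hQP hent, rfl⟩

/-- If `Q ≪ P` with `H(Q|P) ≤ -log α`, then `Q(A) ≥ Λ(P(A))` for every `A ∈ F`, where
`Λ` is the convex distortion vanishing on `[0,1-α]`, with `Λ(a)` the unique `λ ∈ [0,a)`
solving `F(λ,a) = -log α` for `a ∈ (1-α,1)` and `Λ(1) = 1`.  Consequently the entropy
scenario set is contained in the scenario set of the commonotone utility `u_Λ`, and hence
`e_α(ξ) ≥ u_Λ(ξ)` for every bounded random variable `ξ`. -/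
theorem evar_ge_commonotone
    {Ω : Type*} [MeasurableSpace Ω] (P : Measure Ω) [IsProbabilityMeasure P] [NullSingletonClass P]
    (α : ℝ) (hα : α ∈ Set.Ioo (0 : ℝ) 1)
    (Λ : ℝ → ℝ)
    (hΛ0 : ∀ a ∈ Set.Icc (0 : ℝ) (1 - α), Λ a = 0)
    (hΛ1 : ∀ a ∈ Set.Ioo (1 - α) 1, Λ a ∈ Set.Ico 0 a ∧ F (Λ a) a = -Real.log α)
    (hΛ2 : Λ 1 = 1) :
    (∀ Q : Measure Ω, IsProbabilityMeasure Q → Q ≪ P → EntropyLE Q P (-Real.log α) →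
      ∀ A : Set Ω, MeasurableSet A → Λ ((P A).toReal) ≤ (Q A).toReal) ∧
    {Q : Measure Ω | IsProbabilityMeasure Q ∧ Q ≪ P ∧ EntropyLE Q P (-Real.log α)}
      ⊆ {Q : Measure Ω | IsProbabilityMeasure Q ∧ Q ≪ P ∧
          ∀ A : Set Ω, MeasurableSet A → Λ ((P A).toReal) ≤ (Q A).toReal} ∧
    (∀ ξ : Ω → ℝ, Measurable ξ → (∃ C : ℝ, ∀ᵐ ω ∂P, |ξ ω| ≤ C) →
      sInf {y : ℝ | ∃ Q : Measure Ω, IsProbabilityMeasure Q ∧ Q ≪ P ∧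
          (∀ A : Set Ω, MeasurableSet A → Λ ((P A).toReal) ≤ (Q A).toReal) ∧
          y = ∫ ω, ξ ω ∂Q}
        ≤ sInf {y : ℝ | ∃ Q : Measure Ω, IsProbabilityMeasure Q ∧ Q ≪ P ∧
          EntropyLE Q P (-Real.log α) ∧ y = ∫ ω, ξ ω ∂Q}) :=
  evar_ge_commonotone_general P α hα Λ hΛ0 hΛ1 hΛ2
end
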